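/- arXiv:2209.11122 — 3 statements merged into one kernel-verified Lean document; each statement's English description precedes it below -/
import Mathlib

section
/- The number of restricted growth strings of the paper's type of length k-1 (i.e., k-germs: strings a_{k-1}...a_1 with a_{k-1} ∈ {0,1} and 0 ≤ a_{i-1} ≤ a_i + 1 for 1 < i < k) equals the k-th Catalan number C_k = (2k)!/(k!(k+1)!). -/
/-- A `k`-germ: a string `a_{k-1} a_{k-2} ... a_1` (listed left to right) of
length `k-1` with `a_{k-1} ∈ {0,1}` and `a_{i-1} ≤ a_i + 1` for `1 < i < k`. -/
def IsKGerm (k : ℕ) (l : List ℕ) : Prop :=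
  l.length = k - 1 ∧ (∀ h : l ≠ [], l.head h ≤ 1) ∧ l.Chain' (fun x y => y ≤ x + 1)

/-!
Let `c n a` count the lists of length `n` with head at most `a` whose entries rise by at most one
per step, so that the `k`-germs are counted by `c (k - 1) 1 = c k 0`. Splitting off the head gives
`c (n + 1) 0 = c n 1` and `c (n + 1) (a + 1) = c (n + 1) a + c n (a + 2)`, which together with
Pascal's rule show that `c n a` is the ballot number `C(2n+a, n+a) - C(2n+a, n+a+1)` (the
reflection principle). At `a = 0` this is the Catalan number `C(2n, n) - C(2n, n+1)`.
-/

open Finset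

def chainsHeadLE : ℕ → ℕ → Finset (List ℕ)
  | 0, _ => {[]}
  | n + 1, a => (range (a + 1)).biUnion fun b => (chainsHeadLE n (b + 1)).image (b :: ·)

theorem mem_chainsHeadLE {n a : ℕ} {l : List ℕ} :
    l ∈ chainsHeadLE n a ↔
      l.length = n ∧ (∀ h : l ≠ [], l.head h ≤ a) ∧ l.IsChain (fun x y => y ≤ x + 1) := by
  induction n generalizing a l with
  | zero => cases l <;> simp [chainsHeadLE]
  | succ n ih => rcases l with _ | ⟨b, _ | ⟨c, t⟩⟩ <;> simp [chainsHeadLE, ih] <;> tauto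

theorem card_chainsHeadLE_succ (n a : ℕ) :
    #(chainsHeadLE (n + 1) a) = ∑ b ∈ range (a + 1), #(chainsHeadLE n (b + 1)) := by
  rw [chainsHeadLE, card_biUnion]
  · exact sum_congr rfl fun b _ => card_image_of_injective _ List.cons_injective
  · intro b _ c _ hbc
    simp only [Function.onFun, disjoint_left, mem_image]
    rintro _ ⟨s, -, rfl⟩ ⟨t, -, hts⟩
    exact hbc (List.head_eq_of_cons_eq hts).symm

theorem card_chainsHeadLE_succ_zero (n : ℕ) :
    #(chainsHeadLE (n + 1) 0) = #(chainsHeadLE n 1) := by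
  simp [card_chainsHeadLE_succ]

theorem card_chainsHeadLE_succ_succ (n a : ℕ) :
    #(chainsHeadLE (n + 1) (a + 1)) = #(chainsHeadLE (n + 1) a) + #(chainsHeadLE n (a + 2)) := by
  rw [card_chainsHeadLE_succ, sum_range_succ, ← card_chainsHeadLE_succ]

theorem card_chainsHeadLE_add_choose (n a : ℕ) :
    #(chainsHeadLE n a) + (2 * n + a).choose (n + a + 1) = (2 * n + a).choose (n + a) := by
  induction n generalizing a with
  | zero => simp [chainsHeadLE]
  | succ n ih =>
    induction a with
    | zero =>
      have hih := ih 1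
      have hpascal₁ := Nat.choose_succ_succ' (2 * n + 1) n
      have hpascal₂ := Nat.choose_succ_succ' (2 * n + 1) (n + 1)
      have hsymm := Nat.choose_symm_half n
      rw [card_chainsHeadLE_succ_zero]
      ring_nf at hih hpascal₁ hpascal₂ hsymm ⊢
      omega
    | succ a iha =>
      have hih := ih (a + 2)
      have hpascal₁ := Nat.choose_succ_succ' (2 * n + a + 2) (n + a + 1)
      have hpascal₂ := Nat.choose_succ_succ' (2 * n + a + 2) (n + a + 2)
      rw [card_chainsHeadLE_succ_succ]
      ring_nf at iha hih hpascal₁ hpascal₂ ⊢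
      omega

theorem card_chainsHeadLE_zero_eq_catalan (n : ℕ) : #(chainsHeadLE n 0) = catalan n := by
  have hballot := card_chainsHeadLE_add_choose n 0
  have hshift := Nat.choose_succ_right_eq (2 * n) n
  rw [show 2 * n - n = n by omega] at hshift
  refine Nat.eq_of_mul_eq_mul_left n.succ_pos ?_
  rw [succ_mul_catalan_eq_centralBinom, Nat.centralBinom_eq_two_mul_choose]
  simp only [add_zero] at hballot
  nlinarith

theorem catalan_eq_factorial_div (n : ℕ) :
    catalan n = (2 * n).factorial / (n.factorial * (n + 1).factorial) := by
  rw [catalan_eq_centralBinom_div, Nat.centralBinom_eq_two_mul_choose,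
    Nat.choose_eq_factorial_div_factorial (by omega), show 2 * n - n = n by omega,
    Nat.div_div_eq_div_mul, Nat.factorial_succ]
  ring_nf

theorem isKGerm_iff_mem_chainsHeadLE {k : ℕ} {l : List ℕ} :
    IsKGerm k l ↔ l ∈ chainsHeadLE (k - 1) 1 :=
  mem_chainsHeadLE.symm

theorem numKGerms_eq_catalan (k : ℕ) (hk : 1 ≤ k) :
    {l : List ℕ | IsKGerm k l}.ncard =
      (2 * k).factorial / (k.factorial * (k + 1).factorial) := by
  obtain ⟨n, rfl⟩ : ∃ n, k = n + 1 := ⟨k - 1, by omega⟩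
  have hgerms : {l : List ℕ | IsKGerm (n + 1) l} = chainsHeadLE n 1 :=
    Set.ext fun _ => isKGerm_iff_mem_chainsHeadLE
  rw [hgerms, Set.ncard_coe_finset, ← card_chainsHeadLE_succ_zero,
    card_chainsHeadLE_zero_eq_catalan, catalan_eq_factorial_div]
end

section
/- The signature map, sending a Dyck nest F(α) of length n = 2k+1 to the vector (A_{k-1}, ..., A_1) where A_j = floor(d_j/2) and d_j is the number of positions strictly between the two occurrences of the letter j in F(α) — equivalently, A_j is the number of matched pairs (j'', j') nested strictly inside the pair of occurrences of j — is injective on the set of Dyck nests: two Dyck nests with equal signatures are equal. -/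
/-!
The positions strictly between the two occurrences of `j` are exactly the occurrences of the
letters nested inside `j`, so `d_j = 2 A_j + 1`.

For injectivity, the pairs are rebuilt in the order of their labels. A smaller label means a
shallower pair, or a pair of the same depth further right. Hence, once the pairs `1, …, j-1` are
known, the depth of the pair `j` is the least `d` for which some position is neither occupied by
a smaller letter nor covered by a smaller pair of depth `d`, and the second occurrence of `j` is
the last such position at that depth. The first occurrence is then read off from `A_j`; for
`j = k` the pair is innermost and `A_k = 0`, which is why the signature may omit it.
-/

open Finset

/-- A nest string of length `2k+1`: it begins with the letter `0`, every letter is in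
`{0,...,k}`, each `j ∈ {1,...,k}` appears exactly twice, and the pairs of positions of
equal letters form a non-crossing matching. -/
def IsNest (k : ℕ) (f : Fin (2 * k + 1) → ℕ) : Prop :=
  f ⟨0, by omega⟩ = 0 ∧ (∀ i, f i ≤ k) ∧
  (∀ j, 1 ≤ j → j ≤ k → (univ.filter fun i => f i = j).card = 2) ∧
  ∀ a b c d : Fin (2 * k + 1), f a = f b → f c = f d → 1 ≤ f a → 1 ≤ f c →
    f a ≠ f c → a < c → c < b → ¬ b < d

/-- The binary projection: replace each first occurrence of a letter by a 0-bit
(`false`) and each second occurrence by a 1-bit (`true`). -/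
def nestWord (k : ℕ) (f : Fin (2 * k + 1) → ℕ) : Fin (2 * k + 1) → Bool :=
  fun i => decide (∃ i', i' < i ∧ f i' = f i)

/-- An anchored Dyck word of length `2k+1`, as a binary string indexed by `Fin (2k+1)`:
weight `k`, first bit `0`, and every prefix has at least as many 0-bits as 1-bits. -/
def IsAnchoredWordF (k : ℕ) (w : Fin (2 * k + 1) → Bool) : Prop :=
  w ⟨0, by omega⟩ = false ∧ (univ.filter fun i => w i = true).card = k ∧
  ∀ m : ℕ, (univ.filter fun i : Fin (2 * k + 1) => i.val < m ∧ w i = true).card ≤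
           (univ.filter fun i : Fin (2 * k + 1) => i.val < m ∧ w i = false).card

/-- Position of the first occurrence of the letter `j`. -/
noncomputable def fstOcc (k : ℕ) (f : Fin (2 * k + 1) → ℕ) (j : ℕ) : ℕ :=
  sInf {m : ℕ | ∃ h : m < 2 * k + 1, f ⟨m, h⟩ = j}

/-- Position of the second (last) occurrence of the letter `j`. -/
noncomputable def sndOcc (k : ℕ) (f : Fin (2 * k + 1) → ℕ) (j : ℕ) : ℕ :=
  sSup {m : ℕ | ∃ h : m < 2 * k + 1, f ⟨m, h⟩ = j}

/-- The pair of occurrences of `j'` lies strictly inside the pair of occurrences of `j`. -/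
noncomputable def NestInside (k : ℕ) (f : Fin (2 * k + 1) → ℕ) (j j' : ℕ) : Prop :=
  fstOcc k f j < fstOcc k f j' ∧ sndOcc k f j' < sndOcc k f j

/-- The nesting depth of the pair of the letter `j`: the number of pairs strictly
containing it. -/
noncomputable def nestDepth (k : ℕ) (f : Fin (2 * k + 1) → ℕ) (j : ℕ) : ℕ :=
  letI := Classical.decPred fun j' => 1 ≤ j' ∧ j' ≠ j ∧ NestInside k f j' j
  ((Finset.range (k + 1)).filter fun j' =>
    1 ≤ j' ∧ j' ≠ j ∧ NestInside k f j' j).card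

/-- The labeling is canonical: labels `k` down to `1` are assigned to matched pairs by
decreasing height (nesting depth) and left-to-right order within each height level. -/
noncomputable def NestCanonical (k : ℕ) (f : Fin (2 * k + 1) → ℕ) : Prop :=
  ∀ j j', 1 ≤ j → j ≤ k → 1 ≤ j' → j' ≤ k →
    (j' < j ↔ (nestDepth k f j' < nestDepth k f j ∨
      (nestDepth k f j' = nestDepth k f j ∧ fstOcc k f j < fstOcc k f j')))

/-- The signature entry `A_j`: the number of matched pairs nested strictly inside the
pair of occurrences of the letter `j`. -/
noncomputable def sigA (k : ℕ) (f : Fin (2 * k + 1) → ℕ) (j : ℕ) : ℕ :=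
  letI := Classical.decPred fun j' => 1 ≤ j' ∧ j' ≠ j ∧ NestInside k f j j'
  ((Finset.range (k + 1)).filter fun j' =>
    1 ≤ j' ∧ j' ≠ j ∧ NestInside k f j j').card

variable {k : ℕ} {f g : Fin (2 * k + 1) → ℕ} {i j m ℓ d p : ℕ}

lemma NestInside.trans (h₁ : NestInside k f i j) (h₂ : NestInside k f j m) :
    NestInside k f i m :=
  ⟨h₁.1.trans h₂.1, h₂.2.trans h₁.2⟩

lemma NestInside.ne (h : NestInside k f i j) : i ≠ j := by
  rintro rfl
  exact lt_irrefl _ h.1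

lemma fstOcc_sndOcc_of_forall_iff {a b : Fin (2 * k + 1)} (hab : a < b)
    (h : ∀ x, f x = j ↔ x = a ∨ x = b) : fstOcc k f j = a ∧ sndOcc k f j = b := by
  have hset : {m : ℕ | ∃ h : m < 2 * k + 1, f ⟨m, h⟩ = j} = {(a : ℕ), (b : ℕ)} := by
    ext m
    simp only [Set.mem_ofPred_eq, Set.mem_insert_iff, Set.mem_singleton_iff]
    constructor
    · rintro ⟨hm, hfm⟩
      rcases (h _).1 hfm with rfl | rfl <;> simp
    · rintro (rfl | rfl)
      · exact ⟨a.isLt, (h a).2 (Or.inl rfl)⟩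
      · exact ⟨b.isLt, (h b).2 (Or.inr rfl)⟩
  rw [fstOcc, sndOcc, hset, csInf_pair, csSup_pair]
  exact ⟨min_eq_left (Fin.val_fin_le.2 hab.le), max_eq_right (Fin.val_fin_le.2 hab.le)⟩

namespace IsNest

lemma exists_pair (hf : IsNest k f) (hj : j ∈ Set.Icc 1 k) :
    ∃ a b : Fin (2 * k + 1), a < b ∧ ∀ x, f x = j ↔ x = a ∨ x = b := by
  obtain ⟨a, b, hne, hab⟩ := card_eq_two.1 (hf.2.2.1 j hj.1 hj.2)
  have hmem : ∀ x, f x = j ↔ x = a ∨ x = b := fun x => by simpa using Finset.ext_iff.1 hab x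
  rcases hne.lt_or_gt with h | h
  · exact ⟨a, b, h, hmem⟩
  · exact ⟨b, a, h, fun x => (hmem x).trans or_comm⟩

lemma apply_eq_iff (hf : IsNest k f) (hj : j ∈ Set.Icc 1 k) (x : Fin (2 * k + 1)) :
    f x = j ↔ (x : ℕ) = fstOcc k f j ∨ (x : ℕ) = sndOcc k f j := by
  obtain ⟨a, b, hab, h⟩ := hf.exists_pair hj
  obtain ⟨ha, hb⟩ := fstOcc_sndOcc_of_forall_iff hab h
  rw [h x, ha, hb, Fin.val_inj, Fin.val_inj]

lemma fstOcc_lt_sndOcc (hf : IsNest k f) (hj : j ∈ Set.Icc 1 k) :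
    fstOcc k f j < sndOcc k f j := by
  obtain ⟨a, b, hab, h⟩ := hf.exists_pair hj
  obtain ⟨ha, hb⟩ := fstOcc_sndOcc_of_forall_iff hab h
  rw [ha, hb]
  exact hab

lemma sndOcc_lt (hf : IsNest k f) (hj : j ∈ Set.Icc 1 k) : sndOcc k f j < 2 * k + 1 := by
  obtain ⟨a, b, hab, h⟩ := hf.exists_pair hj
  rw [(fstOcc_sndOcc_of_forall_iff hab h).2]
  exact b.isLt

lemma eq_of_occ (hf : IsNest k f) (hi : i ∈ Set.Icc 1 k) (hj : j ∈ Set.Icc 1 k)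
    (hpi : p = fstOcc k f i ∨ p = sndOcc k f i) (hpj : p = fstOcc k f j ∨ p = sndOcc k f j) :
    i = j := by
  have hp : p < 2 * k + 1 := by
    have := hf.fstOcc_lt_sndOcc hi
    have := hf.sndOcc_lt hi
    omega
  rw [← (hf.apply_eq_iff hi ⟨p, hp⟩).2 hpi, (hf.apply_eq_iff hj ⟨p, hp⟩).2 hpj]

lemma card_filter_apply_eq_zero (hf : IsNest k f) : #{x | f x = 0} = 1 := by
  have hsum := card_eq_sum_card_fiberwise (s := univ) (t := range (k + 1)) (f := f)
    fun x _ => mem_range.2 (Nat.lt_succ_of_le (hf.2.1 x))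
  rw [card_univ, Fintype.card_fin, sum_range_succ',
    sum_congr rfl fun i hi => hf.2.2.1 (i + 1) (by omega) (by simp at hi; omega),
    sum_const, card_range, smul_eq_mul] at hsum
  omega

lemma apply_pos (hf : IsNest k f) {x : Fin (2 * k + 1)} (hx : (x : ℕ) ≠ 0) : 0 < f x := by
  refine Nat.pos_of_ne_zero fun h => hx ?_
  have := card_le_one.1 hf.card_filter_apply_eq_zero.le x (by simp [h]) ⟨0, by omega⟩
    (by simpa using hf.1)
  exact congrArg Fin.val this

lemma exists_letter (hf : IsNest k f) (hp₀ : 0 < p) (hp : p < 2 * k + 1) :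
    ∃ ℓ ∈ Set.Icc 1 k, p = fstOcc k f ℓ ∨ p = sndOcc k f ℓ := by
  have hℓ : f ⟨p, hp⟩ ∈ Set.Icc 1 k := ⟨hf.apply_pos (x := ⟨p, hp⟩) hp₀.ne', hf.2.1 _⟩
  exact ⟨_, hℓ, (hf.apply_eq_iff hℓ _).1 rfl⟩

lemma sndOcc_lt_sndOcc (hf : IsNest k f) (hi : i ∈ Set.Icc 1 k) (hj : j ∈ Set.Icc 1 k)
    (hij : i ≠ j) (h₁ : fstOcc k f i < fstOcc k f j) (h₂ : fstOcc k f j < sndOcc k f i) :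
    sndOcc k f j < sndOcc k f i := by
  have := hf.fstOcc_lt_sndOcc hi
  have := hf.sndOcc_lt hi
  have := hf.fstOcc_lt_sndOcc hj
  have := hf.sndOcc_lt hj
  have hcross := hf.2.2.2 ⟨fstOcc k f i, by omega⟩ ⟨sndOcc k f i, by omega⟩
    ⟨fstOcc k f j, by omega⟩ ⟨sndOcc k f j, by omega⟩
  simp only [(hf.apply_eq_iff hi _).2, (hf.apply_eq_iff hj _).2, true_or, or_true,
    Fin.mk_lt_mk, true_implies] at hcross
  have hne : sndOcc k f j ≠ sndOcc k f i := fun e =>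
    hij (hf.eq_of_occ hi hj (Or.inr rfl) (Or.inr e.symm))
  have := hcross hi.1 hj.1 hij h₁ h₂
  omega

lemma nestInside_or_sndOcc_lt (hf : IsNest k f) (hi : i ∈ Set.Icc 1 k) (hj : j ∈ Set.Icc 1 k)
    (hij : i ≠ j) (h : fstOcc k f i < fstOcc k f j) :
    NestInside k f i j ∨ sndOcc k f i < fstOcc k f j := by
  have hne : sndOcc k f i ≠ fstOcc k f j := fun e =>
    hij (hf.eq_of_occ hi hj (Or.inr rfl) (Or.inl e))
  rcases hne.lt_or_gt with h' | h'
  · exact Or.inr h'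
  · exact Or.inl ⟨h, hf.sndOcc_lt_sndOcc hi hj hij h h'⟩

lemma nestInside_or_nestInside_or_separated (hf : IsNest k f) (hi : i ∈ Set.Icc 1 k)
    (hj : j ∈ Set.Icc 1 k) (hij : i ≠ j) :
    NestInside k f i j ∨ NestInside k f j i ∨
      sndOcc k f i < fstOcc k f j ∨ sndOcc k f j < fstOcc k f i := by
  have hne : fstOcc k f i ≠ fstOcc k f j := fun e =>
    hij (hf.eq_of_occ hi hj (Or.inl rfl) (Or.inl e))
  rcases hne.lt_or_gt with h | h
  · rcases hf.nestInside_or_sndOcc_lt hi hj hij h with h' | h' <;> simp [h']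
  · rcases hf.nestInside_or_sndOcc_lt hj hi hij.symm h with h' | h' <;> simp [h']

end IsNest

open Classical in
noncomputable def ancestors (k : ℕ) (f : Fin (2 * k + 1) → ℕ) (j : ℕ) : Finset ℕ :=
  {i ∈ range (k + 1) | 1 ≤ i ∧ i ≠ j ∧ NestInside k f i j}

open Classical in
noncomputable def descendants (k : ℕ) (f : Fin (2 * k + 1) → ℕ) (j : ℕ) : Finset ℕ :=
  {i ∈ range (k + 1) | 1 ≤ i ∧ i ≠ j ∧ NestInside k f j i}

lemma nestDepth_eq_card_ancestors : nestDepth k f j = #(ancestors k f j) := by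
  rw [nestDepth, ancestors]
  congr

lemma sigA_eq_card_descendants : sigA k f j = #(descendants k f j) := by
  rw [sigA, descendants]
  congr

lemma mem_ancestors : i ∈ ancestors k f j ↔ i ∈ Set.Icc 1 k ∧ NestInside k f i j := by
  simp only [ancestors, mem_filter, mem_range, Nat.lt_succ_iff, Set.mem_Icc]
  exact ⟨fun ⟨hik, hi, _, h⟩ => ⟨⟨hi, hik⟩, h⟩, fun ⟨⟨hi, hik⟩, h⟩ => ⟨hik, hi, h.ne, h⟩⟩

lemma mem_descendants : i ∈ descendants k f j ↔ i ∈ Set.Icc 1 k ∧ NestInside k f j i := by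
  simp only [descendants, mem_filter, mem_range, Nat.lt_succ_iff, Set.mem_Icc]
  exact ⟨fun ⟨hik, hi, _, h⟩ => ⟨⟨hi, hik⟩, h⟩, fun ⟨⟨hi, hik⟩, h⟩ => ⟨hik, hi, h.ne.symm, h⟩⟩

lemma nestDepth_lt_of_nestInside (hi : i ∈ Set.Icc 1 k) (h : NestInside k f i j) :
    nestDepth k f i < nestDepth k f j := by
  rw [nestDepth_eq_card_ancestors, nestDepth_eq_card_ancestors]
  refine card_lt_card ((ssubset_iff_of_subset fun m hm => ?_).2 ⟨i, ?_, fun hii => ?_⟩)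
  · rw [mem_ancestors] at hm ⊢
    exact ⟨hm.1, hm.2.trans h⟩
  · exact mem_ancestors.2 ⟨hi, h⟩
  · exact (mem_ancestors.1 hii).2.ne rfl

namespace NestCanonical

lemma lt_of_nestDepth_lt (hc : NestCanonical k f) (hi : i ∈ Set.Icc 1 k)
    (hj : j ∈ Set.Icc 1 k) (h : nestDepth k f i < nestDepth k f j) : i < j :=
  (hc j i hj.1 hj.2 hi.1 hi.2).2 (Or.inl h)

lemma lt_of_fstOcc_lt (hc : NestCanonical k f) (hi : i ∈ Set.Icc 1 k)
    (hj : j ∈ Set.Icc 1 k) (hd : nestDepth k f i = nestDepth k f j)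
    (h : fstOcc k f j < fstOcc k f i) : i < j :=
  (hc j i hj.1 hj.2 hi.1 hi.2).2 (Or.inr ⟨hd, h⟩)

lemma sigA_top_eq_zero (hc : NestCanonical k f) (hk : 0 < k) : sigA k f k = 0 := by
  rw [sigA_eq_card_descendants, card_eq_zero, eq_empty_iff_forall_notMem]
  intro i hi
  obtain ⟨hi, h⟩ := mem_descendants.1 hi
  have := hc.lt_of_nestDepth_lt ⟨hk, le_rfl⟩ hi (nestDepth_lt_of_nestInside ⟨hk, le_rfl⟩ h)
  exact this.not_ge hi.2

end NestCanonical

namespace IsNest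

lemma exists_nestInside_nestDepth_eq (hf : IsNest k f) (hℓ : ℓ ∈ Set.Icc 1 k)
    (hd : d < nestDepth k f ℓ) :
    ∃ m ∈ Set.Icc 1 k, NestInside k f m ℓ ∧ nestDepth k f m = d := by
  -- two ancestors of `ℓ` are nested, so their depths differ: the depths of the
  -- `nestDepth ℓ` ancestors are exactly `0, …, nestDepth ℓ - 1`
  have hinj : Set.InjOn (nestDepth k f) (ancestors k f ℓ) := by
    intro c hc m hm hcm
    by_contra hne
    obtain ⟨hc, hcℓ⟩ := mem_ancestors.1 hc
    obtain ⟨hm, hmℓ⟩ := mem_ancestors.1 hm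
    have := hf.fstOcc_lt_sndOcc hℓ
    rcases hf.nestInside_or_nestInside_or_separated hc hm hne with h | h | h | h
    · exact (nestDepth_lt_of_nestInside hc h).ne hcm
    · exact (nestDepth_lt_of_nestInside hm h).ne' hcm
    · have := hcℓ.2
      have := hmℓ.1
      omega
    · have := hcℓ.1
      have := hmℓ.2
      omega
  have himage : (ancestors k f ℓ).image (nestDepth k f) = range (nestDepth k f ℓ) := by
    refine eq_of_subset_of_card_le (fun e he => ?_) ?_
    · obtain ⟨m, hm, rfl⟩ := mem_image.1 he
      obtain ⟨hm, hmℓ⟩ := mem_ancestors.1 hm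
      exact mem_range.2 (nestDepth_lt_of_nestInside hm hmℓ)
    · rw [card_image_of_injOn hinj, card_range, nestDepth_eq_card_ancestors]
  obtain ⟨m, hm, rfl⟩ := mem_image.1 (himage ▸ mem_range.2 hd)
  exact ⟨m, (mem_ancestors.1 hm).1, (mem_ancestors.1 hm).2, rfl⟩

lemma exists_nestDepth_eq_of_le (hf : IsNest k f) (hℓ : ℓ ∈ Set.Icc 1 k)
    (hd : d ≤ nestDepth k f ℓ) :
    ∃ m ∈ Set.Icc 1 k, nestDepth k f m = d ∧
      fstOcc k f m ≤ fstOcc k f ℓ ∧ sndOcc k f ℓ ≤ sndOcc k f m := by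
  rcases hd.lt_or_eq with hd | rfl
  · obtain ⟨m, hm, hmℓ, rfl⟩ := hf.exists_nestInside_nestDepth_eq hℓ hd
    exact ⟨m, hm, rfl, hmℓ.1.le, hmℓ.2.le⟩
  · exact ⟨ℓ, hℓ, rfl, le_rfl, le_rfl⟩

lemma lt_of_nestDepth_eq_of_sndOcc_lt (hf : IsNest k f) (hc : NestCanonical k f)
    (hm : m ∈ Set.Icc 1 k) (hj : j ∈ Set.Icc 1 k) (hd : nestDepth k f m = nestDepth k f j)
    (h : sndOcc k f j < sndOcc k f m) : m < j := by
  have hmj : m ≠ j := by rintro rfl; exact lt_irrefl _ h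
  have := hf.fstOcc_lt_sndOcc hj
  rcases hf.nestInside_or_nestInside_or_separated hm hj hmj with h' | h' | h' | h'
  · exact absurd hd (nestDepth_lt_of_nestInside hm h').ne
  · exact absurd hd (nestDepth_lt_of_nestInside hj h').ne'
  · omega
  · exact hc.lt_of_fstOcc_lt hm hj hd (by omega)

lemma sndOcc_sub_fstOcc (hf : IsNest k f) (hj : j ∈ Set.Icc 1 k) :
    sndOcc k f j - fstOcc k f j = 2 * sigA k f j + 1 := by
  classical
  have hlt := hf.fstOcc_lt_sndOcc hj
  have hsnd := hf.sndOcc_lt hj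
  set a : Fin (2 * k + 1) := ⟨fstOcc k f j, by omega⟩
  set b : Fin (2 * k + 1) := ⟨sndOcc k f j, hsnd⟩
  have hinside : Ioo a b = (descendants k f j).biUnion fun i => {x | f x = i} := by
    ext x
    simp only [mem_Ioo, mem_biUnion, mem_filter, mem_univ, true_and, exists_eq_right',
      mem_descendants, Fin.lt_def, a, b]
    constructor
    · rintro ⟨h₁, h₂⟩
      have hx : f x ∈ Set.Icc 1 k := ⟨hf.apply_pos (by omega), hf.2.1 x⟩
      have hxℓ := (hf.apply_eq_iff hx x).1 rfl
      have hne : f x ≠ j := fun e => by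
        rcases (hf.apply_eq_iff hj x).1 e with e | e <;> omega
      have := hf.fstOcc_lt_sndOcc hx
      refine ⟨hx, ?_⟩
      rcases hf.nestInside_or_nestInside_or_separated hj hx hne.symm with h | h | h | h
      · exact h
      · have := h.1
        have := h.2
        omega
      · omega
      · omega
    · rintro ⟨hx, h⟩
      have := h.1
      have := h.2
      have := hf.fstOcc_lt_sndOcc hx
      rcases (hf.apply_eq_iff hx x).1 rfl with e | e <;> omega
  have hcard := congrArg card hinside
  rw [Fin.card_Ioo, card_biUnion, sum_congr rfl fun i hi => hf.2.2.1 i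
    (mem_descendants.1 hi).1.1 (mem_descendants.1 hi).1.2, sum_const, smul_eq_mul,
    ← sigA_eq_card_descendants] at hcard
  · simp only [a, b] at hcard
    omega
  · intro i _ i' _ hii'
    exact disjoint_filter.2 fun x _ h h' => hii' (h.symm.trans h')

end IsNest

def IsVacant (k : ℕ) (f : Fin (2 * k + 1) → ℕ) (j d p : ℕ) : Prop :=
  0 < p ∧ p < 2 * k + 1 ∧ ∀ i, 1 ≤ i → i < j →
    p ≠ fstOcc k f i ∧ p ≠ sndOcc k f i ∧
      (nestDepth k f i = d → p < fstOcc k f i ∨ sndOcc k f i < p)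

lemma isVacant_congr (h : ∀ i, 1 ≤ i → i < j → fstOcc k f i = fstOcc k g i ∧
      sndOcc k f i = sndOcc k g i ∧ nestDepth k f i = nestDepth k g i) :
    IsVacant k f j d p ↔ IsVacant k g j d p := by
  refine and_congr_right' (and_congr_right' (forall_congr' fun i =>
    forall_congr' fun hi => forall_congr' fun hij => ?_))
  obtain ⟨h₁, h₂, h₃⟩ := h i hi hij
  rw [h₁, h₂, h₃]

namespace IsNest

lemma isVacant_sndOcc (hf : IsNest k f) (hj : j ∈ Set.Icc 1 k) :
    IsVacant k f j (nestDepth k f j) (sndOcc k f j) := by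
  have := hf.fstOcc_lt_sndOcc hj
  refine ⟨by omega, hf.sndOcc_lt hj, fun i hi₁ hij => ?_⟩
  have hi : i ∈ Set.Icc 1 k := ⟨hi₁, by have := hj.2; omega⟩
  have hne : i ≠ j := hij.ne
  refine ⟨fun e => hne (hf.eq_of_occ hi hj (Or.inl e) (Or.inr rfl)),
    fun e => hne (hf.eq_of_occ hi hj (Or.inr e) (Or.inr rfl)), fun hd => ?_⟩
  have := hf.fstOcc_lt_sndOcc hi
  rcases hf.nestInside_or_nestInside_or_separated hi hj hne with h | h | h | h
  · exact absurd hd (nestDepth_lt_of_nestInside hi h).ne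
  · exact absurd hd (nestDepth_lt_of_nestInside hj h).ne'
  · omega
  · omega

lemma nestDepth_le_of_isVacant (hf : IsNest k f) (hc : NestCanonical k f)
    (hj : j ∈ Set.Icc 1 k) (hp : IsVacant k f j d p) : nestDepth k f j ≤ d := by
  by_contra! hd
  obtain ⟨hp₀, hpk, hvac⟩ := hp
  obtain ⟨ℓ, hℓ, hpℓ⟩ := hf.exists_letter hp₀ hpk
  have := hf.fstOcc_lt_sndOcc hℓ
  rcases lt_or_ge (nestDepth k f ℓ) d with hℓd | hℓd
  · have := hvac ℓ hℓ.1 (hc.lt_of_nestDepth_lt hℓ hj (hℓd.trans hd))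
    omega
  · obtain ⟨m, hm, hmd, hm₁, hm₂⟩ := hf.exists_nestDepth_eq_of_le hℓ hℓd
    have := (hvac m hm.1 (hc.lt_of_nestDepth_lt hm hj (hmd ▸ hd))).2.2 hmd
    omega

lemma le_sndOcc_of_isVacant (hf : IsNest k f) (hc : NestCanonical k f)
    (hj : j ∈ Set.Icc 1 k) (hp : IsVacant k f j (nestDepth k f j) p) : p ≤ sndOcc k f j := by
  by_contra! hlt
  obtain ⟨hp₀, hpk, hvac⟩ := hp
  obtain ⟨ℓ, hℓ, hpℓ⟩ := hf.exists_letter hp₀ hpk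
  have := hf.fstOcc_lt_sndOcc hℓ
  rcases lt_or_ge (nestDepth k f ℓ) (nestDepth k f j) with hℓd | hℓd
  · have := hvac ℓ hℓ.1 (hc.lt_of_nestDepth_lt hℓ hj hℓd)
    omega
  · obtain ⟨m, hm, hmd, hm₁, hm₂⟩ := hf.exists_nestDepth_eq_of_le hℓ hℓd
    have hmj := hf.lt_of_nestDepth_eq_of_sndOcc_lt hc hm hj hmd (by omega)
    have := (hvac m hm.1 hmj).2.2 hmd
    omega

lemma occ_eq_of_forall_lt (hf : IsNest k f) (hcf : NestCanonical k f) (hg : IsNest k g)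
    (hcg : NestCanonical k g) (hj : j ∈ Set.Icc 1 k) (hsig : sigA k f j = sigA k g j)
    (ih : ∀ i, 1 ≤ i → i < j → fstOcc k f i = fstOcc k g i ∧
      sndOcc k f i = sndOcc k g i ∧ nestDepth k f i = nestDepth k g i) :
    fstOcc k f j = fstOcc k g j ∧ sndOcc k f j = sndOcc k g j ∧
      nestDepth k f j = nestDepth k g j := by
  have hvac : ∀ {d p}, IsVacant k f j d p ↔ IsVacant k g j d p := isVacant_congr ih
  have hdepth : nestDepth k f j = nestDepth k g j := le_antisymm
    (hf.nestDepth_le_of_isVacant hcf hj (hvac.2 (hg.isVacant_sndOcc hj)))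
    (hg.nestDepth_le_of_isVacant hcg hj (hvac.1 (hf.isVacant_sndOcc hj)))
  have hsnd : sndOcc k f j = sndOcc k g j := le_antisymm
    (hg.le_sndOcc_of_isVacant hcg hj (hdepth ▸ hvac.1 (hf.isVacant_sndOcc hj)))
    (hf.le_sndOcc_of_isVacant hcf hj (hdepth ▸ hvac.2 (hg.isVacant_sndOcc hj)))
  have hf' := hf.sndOcc_sub_fstOcc hj
  have hg' := hg.sndOcc_sub_fstOcc hj
  have := hf.fstOcc_lt_sndOcc hj
  have := hg.fstOcc_lt_sndOcc hj
  exact ⟨by omega, hsnd, hdepth⟩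

lemma ext_of_occ (hf : IsNest k f) (hg : IsNest k g)
    (h : ∀ j ∈ Set.Icc 1 k, fstOcc k f j = fstOcc k g j ∧ sndOcc k f j = sndOcc k g j) :
    f = g := by
  funext x
  by_cases hx : (x : ℕ) = 0
  · rw [show x = ⟨0, by omega⟩ from Fin.ext hx, hf.1, hg.1]
  · have hℓ : f x ∈ Set.Icc 1 k := ⟨hf.apply_pos hx, hf.2.1 x⟩
    have hocc := (hf.apply_eq_iff hℓ x).1 rfl
    rw [(h _ hℓ).1, (h _ hℓ).2] at hocc
    exact ((hg.apply_eq_iff hℓ x).2 hocc).symm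

theorem eq_of_sigA_eq (hf : IsNest k f) (hcf : NestCanonical k f) (hg : IsNest k g)
    (hcg : NestCanonical k g) (hsig : ∀ j, 1 ≤ j → j < k → sigA k f j = sigA k g j) :
    f = g := by
  have hsig' : ∀ j ∈ Set.Icc 1 k, sigA k f j = sigA k g j := by
    rintro j ⟨hj₁, hjk⟩
    rcases hjk.lt_or_eq with hjk | rfl
    · exact hsig j hj₁ hjk
    · rw [hcf.sigA_top_eq_zero hj₁, hcg.sigA_top_eq_zero hj₁]
  have hocc : ∀ j ∈ Set.Icc 1 k, fstOcc k f j = fstOcc k g j ∧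
      sndOcc k f j = sndOcc k g j ∧ nestDepth k f j = nestDepth k g j := by
    intro j
    induction j using Nat.strong_induction_on with
    | _ j ih =>
      intro hj
      exact hf.occ_eq_of_forall_lt hcf hg hcg hj (hsig' j hj) fun i hi hij =>
        ih i hij ⟨hi, hij.le.trans hj.2⟩
  exact hf.ext_of_occ hg fun j hj => ⟨(hocc j hj).1, (hocc j hj).2.1⟩

end IsNest

/-- `A_j` equals the halfway-distance floor `⌊d_j/2⌋` between the two occurrences of `j`,
and the signature map is injective on Dyck nests: two Dyck nests with equal signatures
`(A_{k-1},...,A_1)` are equal. -/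
theorem signature_injective (k : ℕ) :
    (∀ f, IsNest k f → NestCanonical k f → ∀ j, 1 ≤ j → j ≤ k →
      (sndOcc k f j - fstOcc k f j) / 2 = sigA k f j) ∧
    ∀ f g, IsNest k f → NestCanonical k f → IsNest k g → NestCanonical k g →
      (∀ j, 1 ≤ j → j < k → sigA k f j = sigA k g j) → f = g := by
  refine ⟨fun f hf _ j hj₁ hjk => ?_, fun f g hf hcf hg hcg hsig => ?_⟩
  · rw [hf.sndOcc_sub_fstOcc ⟨hj₁, hjk⟩]
    omega
  · exact hf.eq_of_sigA_eq hcf hg hcg hsig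
end

section
/- For a non-crossing perfect matching of 2k points on a line, if for each matched pair p the quantity A(p) denotes the number of pairs nested strictly inside p, then the positions of all pairs are uniquely determined by the multiset of values A(p) listed according to the canonical labeling (by decreasing nesting depth and left-to-right order); i.e., the map from non-crossing matchings to such labeled value-vectors is injective. -/
open Finset

/-- A canonical labeling of a non-crossing perfect matching of `2k` points on a line:
`f i` is the label of the pair containing point `i`; each label `j ∈ {1,...,k}` is used
on exactly one pair (two points), and the pairs are non-crossing. -/
def IsMatchingLabel (k : ℕ) (f : Fin (2 * k) → ℕ) : Prop :=
  (∀ i, 1 ≤ f i ∧ f i ≤ k) ∧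
  (∀ j, 1 ≤ j → j ≤ k → (univ.filter fun i => f i = j).card = 2) ∧
  ∀ a b c d : Fin (2 * k), f a = f b → f c = f d → f a ≠ f c →
    a < c → c < b → ¬ b < d

/-- Left endpoint of the pair with label `j`. -/
noncomputable def fstPt (k : ℕ) (f : Fin (2 * k) → ℕ) (j : ℕ) : ℕ :=
  sInf {m : ℕ | ∃ h : m < 2 * k, f ⟨m, h⟩ = j}

/-- Right endpoint of the pair with label `j`. -/
noncomputable def sndPt (k : ℕ) (f : Fin (2 * k) → ℕ) (j : ℕ) : ℕ :=
  sSup {m : ℕ | ∃ h : m < 2 * k, f ⟨m, h⟩ = j}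

/-- The pair labeled `j'` is nested strictly inside the pair labeled `j`. -/
noncomputable def PairInside (k : ℕ) (f : Fin (2 * k) → ℕ) (j j' : ℕ) : Prop :=
  fstPt k f j < fstPt k f j' ∧ sndPt k f j' < sndPt k f j

/-- The nesting depth of the pair labeled `j`: the number of pairs containing it. -/
noncomputable def pairDepth (k : ℕ) (f : Fin (2 * k) → ℕ) (j : ℕ) : ℕ :=
  letI := Classical.decPred fun j' => 1 ≤ j' ∧ j' ≠ j ∧ PairInside k f j' j
  ((Finset.range (k + 1)).filter fun j' =>
    1 ≤ j' ∧ j' ≠ j ∧ PairInside k f j' j).card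

/-- The labeling is the canonical one: labels `k,...,1` are assigned to pairs by
decreasing nesting depth and left-to-right order within each depth. -/
noncomputable def PairCanonical (k : ℕ) (f : Fin (2 * k) → ℕ) : Prop :=
  ∀ j j', 1 ≤ j → j ≤ k → 1 ≤ j' → j' ≤ k →
    (j' < j ↔ (pairDepth k f j' < pairDepth k f j ∨
      (pairDepth k f j' = pairDepth k f j ∧ fstPt k f j < fstPt k f j')))

/-- `A(p)`: the number of pairs nested strictly inside the pair labeled `j`. -/
noncomputable def pairA (k : ℕ) (f : Fin (2 * k) → ℕ) (j : ℕ) : ℕ :=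
  letI := Classical.decPred fun j' => 1 ≤ j' ∧ j' ≠ j ∧ PairInside k f j j'
  ((Finset.range (k + 1)).filter fun j' =>
    1 ≤ j' ∧ j' ≠ j ∧ PairInside k f j j').card

section Aux

variable {k : ℕ}

/-- Basic facts about the two points of a label. -/
lemma two_pts {f : Fin (2*k) → ℕ} (hf : IsMatchingLabel k f) {j : ℕ}
    (h1 : 1 ≤ j) (h2 : j ≤ k) :
    fstPt k f j < sndPt k f j ∧ sndPt k f j < 2*k ∧
      ∀ m (hm : m < 2*k), (f ⟨m, hm⟩ = j ↔ (m = fstPt k f j ∨ m = sndPt k f j)) := by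
  classical
  obtain ⟨hb, hcard, _⟩ := hf
  obtain ⟨a, b, hab, hset⟩ := Finset.card_eq_two.mp (hcard j h1 h2)
  have hmem : ∀ i : Fin (2*k), f i = j ↔ (i = a ∨ i = b) := by
    intro i
    constructor
    · intro hi
      have : i ∈ Finset.univ.filter fun i => f i = j := by simp [hi]
      rw [hset] at this; simpa using this
    · intro h
      have h2 : i ∈ ({a, b} : Finset (Fin (2*k))) := by
        rcases h with rfl | rfl <;> simp
      rw [← hset] at h2
      simpa using h2
  have key : ∀ a b : Fin (2*k), (a : ℕ) < (b : ℕ) →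
      (∀ i : Fin (2*k), f i = j ↔ (i = a ∨ i = b)) →
      fstPt k f j < sndPt k f j ∧ sndPt k f j < 2*k ∧
        ∀ m (hm : m < 2*k), (f ⟨m, hm⟩ = j ↔ (m = fstPt k f j ∨ m = sndPt k f j)) := by
    intro a b hlt hmem
    set S : Set ℕ := {m : ℕ | ∃ h : m < 2 * k, f ⟨m, h⟩ = j} with hS
    have haS : (a : ℕ) ∈ S := ⟨a.isLt, (hmem _).mpr (Or.inl (by ext; rfl))⟩
    have hbS : (b : ℕ) ∈ S := ⟨b.isLt, (hmem _).mpr (Or.inr (by ext; rfl))⟩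
    have hSsub : ∀ m ∈ S, m = (a : ℕ) ∨ m = (b : ℕ) := by
      rintro m ⟨hm, hfm⟩
      rcases (hmem _).mp hfm with h | h
      · left; exact congrArg Fin.val h
      · right; exact congrArg Fin.val h
    have hbdd : BddAbove S := by
      refine ⟨2*k, ?_⟩
      rintro x ⟨hx, -⟩; exact le_of_lt hx
    have hfst : fstPt k f j = (a : ℕ) := by
      have h1' : fstPt k f j ≤ (a : ℕ) := Nat.sInf_le haS
      have h2' : fstPt k f j ∈ S := Nat.sInf_mem ⟨_, haS⟩
      rcases hSsub _ h2' with h | h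
      · exact h
      · omega
    have hsnd : sndPt k f j = (b : ℕ) := by
      have h1' : (b : ℕ) ≤ sndPt k f j := le_csSup hbdd hbS
      have h2' : sndPt k f j ∈ S := Nat.sSup_mem ⟨_, hbS⟩ hbdd
      rcases hSsub _ h2' with h | h
      · omega
      · exact h
    refine ⟨by omega, by rw [hsnd]; exact b.isLt, ?_⟩
    intro m hm
    rw [hfst, hsnd]
    constructor
    · intro hfm
      rcases (hmem _).mp hfm with h | h
      · left; exact congrArg Fin.val h
      · right; exact congrArg Fin.val h
    · rintro (h | h)
      · exact (hmem _).mpr (Or.inl (by ext; exact h))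
      · exact (hmem _).mpr (Or.inr (by ext; exact h))
  rcases lt_or_gt_of_ne hab with h | h
  · exact key a b h hmem
  · exact key b a h (fun i => (hmem i).trans or_comm)

lemma fst_lt_2k {f : Fin (2*k) → ℕ} (hf : IsMatchingLabel k f) {j : ℕ}
    (h1 : 1 ≤ j) (h2 : j ≤ k) : fstPt k f j < 2*k := by
  have := two_pts hf h1 h2; omega

lemma f_eq_iff {f : Fin (2*k) → ℕ} (hf : IsMatchingLabel k f) {j : ℕ}
    (h1 : 1 ≤ j) (h2 : j ≤ k) {m : ℕ} (hm : m < 2*k) :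
    f ⟨m, hm⟩ = j ↔ (m = fstPt k f j ∨ m = sndPt k f j) :=
  (two_pts hf h1 h2).2.2 m hm

end Aux
section Aux2

variable {k : ℕ}

/-- Non-crossing trichotomy: two distinct pairs are disjoint or nested. -/
lemma nested_or_disjoint {f : Fin (2*k) → ℕ} (hf : IsMatchingLabel k f) {p q : ℕ}
    (hp1 : 1 ≤ p) (hp2 : p ≤ k) (hq1 : 1 ≤ q) (hq2 : q ≤ k) (hne : p ≠ q) :
    sndPt k f p < fstPt k f q ∨ sndPt k f q < fstPt k f p ∨
      PairInside k f p q ∨ PairInside k f q p := by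
  obtain ⟨hpo, hpb, hpiff⟩ := two_pts hf hp1 hp2
  obtain ⟨hqo, hqb, hqiff⟩ := two_pts hf hq1 hq2
  -- all endpoints distinct
  have hdist : ∀ m (hm : m < 2*k), ¬((m = fstPt k f p ∨ m = sndPt k f p) ∧
      (m = fstPt k f q ∨ m = sndPt k f q)) := by
    intro m hm ⟨h1, h2⟩
    exact hne (((hpiff m hm).mpr h1).symm.trans ((hqiff m hm).mpr h2))
  have key : ∀ p q : ℕ, 1 ≤ p → p ≤ k → 1 ≤ q → q ≤ k → p ≠ q →
      fstPt k f p < fstPt k f q → fstPt k f q < sndPt k f p →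
      PairInside k f p q := by
    intro p q hp1 hp2 hq1 hq2 hne hlt1 hlt2
    obtain ⟨hpo, hpb, hpiff⟩ := two_pts hf hp1 hp2
    obtain ⟨hqo, hqb, hqiff⟩ := two_pts hf hq1 hq2
    refine ⟨hlt1, ?_⟩
    by_contra hcon
    push_neg at hcon
    have hne' : sndPt k f p ≠ sndPt k f q := by
      intro h
      exact hne (((hpiff _ (by omega)).mpr (Or.inr rfl)).symm.trans
        ((hqiff _ (by omega)).mpr (Or.inr h)))
    have hlt3 : sndPt k f p < sndPt k f q := by omega
    have hax := hf.2.2 ⟨fstPt k f p, by omega⟩ ⟨sndPt k f p, by omega⟩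
      ⟨fstPt k f q, by omega⟩ ⟨sndPt k f q, by omega⟩
    have e1 : f ⟨fstPt k f p, by omega⟩ = p := (hpiff _ _).mpr (Or.inl rfl)
    have e2 : f ⟨sndPt k f p, by omega⟩ = p := (hpiff _ _).mpr (Or.inr rfl)
    have e3 : f ⟨fstPt k f q, by omega⟩ = q := (hqiff _ _).mpr (Or.inl rfl)
    have e4 : f ⟨sndPt k f q, by omega⟩ = q := (hqiff _ _).mpr (Or.inr rfl)
    exact hax (e1.trans e2.symm) (e3.trans e4.symm)
      (by rw [e1, e3]; exact hne)
      (by simpa [Fin.lt_def] using hlt1)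
      (by simpa [Fin.lt_def] using hlt2)
      (by simpa [Fin.lt_def] using hlt3)
  have hfne : fstPt k f p ≠ fstPt k f q := by
    intro h
    exact hdist (fstPt k f p) (by omega) ⟨Or.inl rfl, Or.inl h⟩
  rcases lt_or_gt_of_ne hfne with h | h
  · by_cases h2 : fstPt k f q < sndPt k f p
    · exact Or.inr (Or.inr (Or.inl (key p q hp1 hp2 hq1 hq2 hne h h2)))
    · have : sndPt k f p ≠ fstPt k f q := by
        intro hh
        exact hdist (sndPt k f p) (by omega) ⟨Or.inr rfl, Or.inl hh⟩
      left; omega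
  · by_cases h2 : fstPt k f p < sndPt k f q
    · exact Or.inr (Or.inr (Or.inr (key q p hq1 hq2 hp1 hp2 (Ne.symm hne) h h2)))
    · have : sndPt k f q ≠ fstPt k f p := by
        intro hh
        exact hdist (fstPt k f p) (by omega) ⟨Or.inl rfl, Or.inr hh.symm⟩
      right; left; omega

/-- A point strictly inside pair `j` belongs to a pair nested inside `j`. -/
lemma point_inside {f : Fin (2*k) → ℕ} (hf : IsMatchingLabel k f) {j p : ℕ}
    (hj1 : 1 ≤ j) (hj2 : j ≤ k) (hp1 : 1 ≤ p) (hp2 : p ≤ k) (hne : p ≠ j)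
    {m : ℕ} (hm : m < 2*k) (hfm : f ⟨m, hm⟩ = p)
    (h1 : fstPt k f j < m) (h2 : m < sndPt k f j) :
    PairInside k f j p := by
  obtain ⟨hpo, hpb, hpiff⟩ := two_pts hf hp1 hp2
  have hmp : m = fstPt k f p ∨ m = sndPt k f p := (hpiff m hm).mp hfm
  rcases nested_or_disjoint hf hp1 hp2 hj1 hj2 hne with h | h | h | h
  · omega
  · omega
  · -- PairInside p j : pair j inside pair p
    obtain ⟨ha, hb⟩ := h
    omega
  · exact h

end Aux2
section Aux3

variable {k : ℕ}

/-- The set of (labels of) pairs strictly containing the pair labeled `p`. -/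
noncomputable def ctrs (k : ℕ) (f : Fin (2*k) → ℕ) (p : ℕ) : Finset ℕ :=
  letI := Classical.decPred fun i => 1 ≤ i ∧ i ≠ p ∧ PairInside k f i p
  (Finset.range (k + 1)).filter fun i => 1 ≤ i ∧ i ≠ p ∧ PairInside k f i p

lemma ctrs_card (f : Fin (2*k) → ℕ) (p : ℕ) : (ctrs k f p).card = pairDepth k f p := by
  rfl

lemma mem_ctrs {f : Fin (2*k) → ℕ} {p i : ℕ} :
    i ∈ ctrs k f p ↔ (i < k + 1 ∧ 1 ≤ i ∧ i ≠ p ∧ PairInside k f i p) := by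
  simp only [ctrs, Finset.mem_filter, Finset.mem_range]

/-- Containers of `p` with label below `j`. -/
noncomputable def below (k : ℕ) (f : Fin (2*k) → ℕ) (j p : ℕ) : Finset ℕ :=
  letI := Classical.decPred fun i => 1 ≤ i ∧ PairInside k f i p
  (Finset.range j).filter fun i => 1 ≤ i ∧ PairInside k f i p

lemma mem_below {f : Fin (2*k) → ℕ} {j p i : ℕ} :
    i ∈ below k f j p ↔ (i < j ∧ 1 ≤ i ∧ PairInside k f i p) := by
  simp only [below, Finset.mem_filter, Finset.mem_range]

/-- Nesting increases depth. -/
lemma depth_lt_of_inside {f : Fin (2*k) → ℕ} {i p : ℕ}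
    (hi1 : 1 ≤ i) (hi2 : i ≤ k) (hne : i ≠ p) (h : PairInside k f i p) :
    pairDepth k f i < pairDepth k f p := by
  classical
  have hsub : insert i (ctrs k f i) ⊆ ctrs k f p := by
    intro c hc
    rcases Finset.mem_insert.mp hc with rfl | hc
    · exact mem_ctrs.mpr ⟨by omega, hi1, hne, h⟩
    · obtain ⟨hc1, hc2, hc3, hc4⟩ := mem_ctrs.mp hc
      refine mem_ctrs.mpr ⟨hc1, hc2, ?_, ?_⟩
      · rintro rfl
        obtain ⟨a1, a2⟩ := h
        obtain ⟨b1, b2⟩ := hc4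
        omega
      · obtain ⟨a1, a2⟩ := h
        obtain ⟨b1, b2⟩ := hc4
        exact ⟨by omega, by omega⟩
  have hnm : i ∉ ctrs k f i := by
    intro hc
    obtain ⟨-, -, hcc, -⟩ := mem_ctrs.mp hc
    exact hcc rfl
  have := Finset.card_le_card hsub
  rw [Finset.card_insert_of_notMem hnm] at this
  rw [← ctrs_card, ← ctrs_card]
  omega

/-- Canonicity: deeper pairs get larger labels. -/
lemma label_lt_of_depth_lt {f : Fin (2*k) → ℕ} (hfc : PairCanonical k f) {j p : ℕ}
    (hj1 : 1 ≤ j) (hj2 : j ≤ k) (hp1 : 1 ≤ p) (hp2 : p ≤ k)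
    (h : pairDepth k f j < pairDepth k f p) : j < p :=
  (hfc p j hp1 hp2 hj1 hj2).mpr (Or.inl h)

lemma depth_le_of_label_lt {f : Fin (2*k) → ℕ} (hfc : PairCanonical k f) {j p : ℕ}
    (hj1 : 1 ≤ j) (hj2 : j ≤ k) (hp1 : 1 ≤ p) (hp2 : p ≤ k)
    (h : j < p) : pairDepth k f j ≤ pairDepth k f p := by
  rcases (hfc p j hp1 hp2 hj1 hj2).mp h with h' | h'
  · omega
  · omega

lemma fst_lt_of_eq_depth {f : Fin (2*k) → ℕ} (hfc : PairCanonical k f) {j p : ℕ}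
    (hj1 : 1 ≤ j) (hj2 : j ≤ k) (hp1 : 1 ≤ p) (hp2 : p ≤ k)
    (h : j < p) (hd : pairDepth k f j = pairDepth k f p) :
    fstPt k f p < fstPt k f j := by
  rcases (hfc p j hp1 hp2 hj1 hj2).mp h with h' | h'
  · omega
  · exact h'.2

/-- label of container is smaller. -/
lemma label_lt_of_inside {f : Fin (2*k) → ℕ} (hfc : PairCanonical k f) {i p : ℕ}
    (hi1 : 1 ≤ i) (hi2 : i ≤ k) (hp1 : 1 ≤ p) (hp2 : p ≤ k)
    (hne : i ≠ p) (h : PairInside k f i p) : i < p :=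
  label_lt_of_depth_lt hfc hi1 hi2 hp1 hp2 (depth_lt_of_inside hi1 hi2 hne h)

/-- Equal-depth pairs are disjoint, and the larger label is to the left. -/
lemma disjoint_of_eq_depth {f : Fin (2*k) → ℕ} (hf : IsMatchingLabel k f)
    (hfc : PairCanonical k f) {j p : ℕ}
    (hj1 : 1 ≤ j) (hj2 : j ≤ k) (hp1 : 1 ≤ p) (hp2 : p ≤ k)
    (h : j < p) (hd : pairDepth k f j = pairDepth k f p) :
    sndPt k f p < fstPt k f j := by
  have hfst := fst_lt_of_eq_depth hfc hj1 hj2 hp1 hp2 h hd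
  have hne : p ≠ j := by omega
  rcases nested_or_disjoint hf hp1 hp2 hj1 hj2 hne with h' | h' | h' | h'
  · exact h'
  · obtain ⟨a, b, -⟩ := two_pts hf hp1 hp2
    obtain ⟨c, d, -⟩ := two_pts hf hj1 hj2
    omega
  · -- PairInside p j : j inside p
    have := depth_lt_of_inside hp1 hp2 hne h'
    omega
  · have := depth_lt_of_inside hj1 hj2 (by omega) h'
    omega

end Aux3
section Aux4

variable {k : ℕ}

/-- Number of already-placed pairs (label `< j`) strictly containing point `m`. -/
noncomputable def cdf (k : ℕ) (f : Fin (2*k) → ℕ) (j m : ℕ) : ℕ :=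
  ((Finset.range j).filter fun i => 1 ≤ i ∧ fstPt k f i < m ∧ m < sndPt k f i).card

/-- For `m` an endpoint of pair `p` (`p ≥ j`), `cdf` counts the containers of `p`
with label below `j`. -/
lemma cdf_endpoint {f : Fin (2*k) → ℕ} (hf : IsMatchingLabel k f) {j p : ℕ}
    (hj1 : 1 ≤ j) (hjk : j ≤ k) (hp1 : 1 ≤ p) (hp2 : p ≤ k) (hjp : j ≤ p)
    {m : ℕ} (hm : m = fstPt k f p ∨ m = sndPt k f p) :
    cdf k f j m = (below k f j p).card := by
  classical
  obtain ⟨hpo, hpb, hpiff⟩ := two_pts hf hp1 hp2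
  have hm2k : m < 2*k := by omega
  have hfm : f ⟨m, hm2k⟩ = p := (hpiff m hm2k).mpr hm
  unfold cdf
  rw [show below k f j p =
    (Finset.range j).filter fun i => 1 ≤ i ∧ fstPt k f i < m ∧ m < sndPt k f i from ?_]
  · ext i
    rw [mem_below, Finset.mem_filter, Finset.mem_range]
    constructor
    · rintro ⟨hij, hi1, ha, hb⟩
      exact ⟨hij, hi1, by omega, by omega⟩
    · rintro ⟨hij, hi1, ha, hb⟩
      refine ⟨hij, hi1, ?_⟩
      exact point_inside hf hi1 (by omega) hp1 hp2 (by omega) hm2k hfm ha hb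

/-- `cdf` at the endpoint of pair `j` itself equals the depth of `j`. -/
lemma cdf_self {f : Fin (2*k) → ℕ} (hf : IsMatchingLabel k f) (hfc : PairCanonical k f)
    {j : ℕ} (hj1 : 1 ≤ j) (hjk : j ≤ k) :
    (below k f j j).card = pairDepth k f j := by
  classical
  rw [← ctrs_card]
  congr 1
  ext i
  rw [mem_below, mem_ctrs]
  constructor
  · rintro ⟨hij, hi1, h⟩
    exact ⟨by omega, hi1, by omega, h⟩
  · rintro ⟨hik, hi1, hne, h⟩
    exact ⟨label_lt_of_inside hfc hi1 (by omega) hj1 hjk hne h, hi1, h⟩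

/-- Splitting the containers of `p` at label `j`. -/
lemma ctrs_split {f : Fin (2*k) → ℕ} (hfc : PairCanonical k f) {j p : ℕ}
    (hj1 : 1 ≤ j) (hjk : j ≤ k) (hp1 : 1 ≤ p) (hp2 : p ≤ k) (hjp : j ≤ p) :
    (below k f j p).card + ((ctrs k f p).filter fun i => j ≤ i).card = pairDepth k f p := by
  classical
  rw [← ctrs_card]
  have : below k f j p = (ctrs k f p).filter fun i => i < j := by
    ext i
    rw [mem_below, Finset.mem_filter, mem_ctrs]
    constructor
    · rintro ⟨hij, hi1, h⟩
      exact ⟨⟨by omega, hi1, by omega, h⟩, hij⟩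
    · rintro ⟨⟨hik, hi1, hne, h⟩, hij⟩
      exact ⟨hij, hi1, h⟩
  rw [this]
  have h2 := Finset.card_filter_add_card_filter_not
    (s := ctrs k f p) (p := fun i => i < j)
  rw [← h2]
  congr 1
  apply congrArg
  apply Finset.filter_congr
  intro i _
  simp only [not_lt, eq_iff_iff]

/-- The width of a pair is determined by its `A`-value. -/
lemma snd_eq_fst_add {f : Fin (2*k) → ℕ} (hf : IsMatchingLabel k f) {j : ℕ}
    (hj1 : 1 ≤ j) (hjk : j ≤ k) :
    sndPt k f j = fstPt k f j + 2 * pairA k f j + 1 := by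
  classical
  obtain ⟨hjo, hjb, hjiff⟩ := two_pts hf hj1 hjk
  set a := fstPt k f j
  set b := sndPt k f j
  -- interior points
  set I : Finset (Fin (2*k)) := Finset.univ.filter (fun i => a < (i : ℕ) ∧ (i : ℕ) < b)
    with hI
  set ins : Finset ℕ := (Finset.range (k + 1)).filter
    (fun j' => 1 ≤ j' ∧ j' ≠ j ∧ PairInside k f j j') with hins
  have hcardI : I.card = b - a - 1 := by
    rw [show b - a - 1 = (Finset.Ioo a b).card by rw [Nat.card_Ioo]]
    apply Finset.card_bij (fun (i : Fin (2*k)) _ => (i : ℕ))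
    · intro i hi
      rw [hI, Finset.mem_filter] at hi
      rw [Finset.mem_Ioo]
      exact hi.2
    · intro i hi i' hi' h
      exact Fin.ext h
    · intro m hm
      rw [Finset.mem_Ioo] at hm
      refine ⟨⟨m, by omega⟩, ?_, rfl⟩
      rw [hI, Finset.mem_filter]
      exact ⟨Finset.mem_univ _, hm.1, hm.2⟩
  have hIeq : I = ins.biUnion (fun p => Finset.univ.filter (fun i => f i = p)) := by
    ext i
    rw [hI, Finset.mem_filter, Finset.mem_biUnion]
    constructor
    · rintro ⟨-, h1, h2⟩
      set p := f i with hp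
      have hp1 : 1 ≤ p := (hf.1 i).1
      have hp2 : p ≤ k := (hf.1 i).2
      have hpj : p ≠ j := by
        rintro rfl
        have : (i : ℕ) = a ∨ (i : ℕ) = b := (hjiff _ i.isLt).mp (by rw [← hp])
        omega
      have hinside : PairInside k f j p :=
        point_inside hf hj1 hjk hp1 hp2 hpj i.isLt (by rw [← hp]) h1 h2
      refine ⟨p, ?_, ?_⟩
      · rw [hins, Finset.mem_filter, Finset.mem_range]
        exact ⟨by omega, hp1, hpj, hinside⟩
      · rw [Finset.mem_filter]
        exact ⟨Finset.mem_univ _, rfl⟩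
    · rintro ⟨p, hpmem, hpi⟩
      rw [hins, Finset.mem_filter, Finset.mem_range] at hpmem
      obtain ⟨hpk, hp1, hpj, hinside⟩ := hpmem
      rw [Finset.mem_filter] at hpi
      obtain ⟨-, hfi⟩ := hpi
      obtain ⟨hpo, hpb, hpiff⟩ := two_pts hf hp1 (by omega)
      have : (i : ℕ) = fstPt k f p ∨ (i : ℕ) = sndPt k f p :=
        (hpiff _ i.isLt).mp (by rw [← hfi])
      obtain ⟨u, v⟩ := hinside
      exact ⟨Finset.mem_univ _, by omega, by omega⟩
  have hdisj : (ins : Set ℕ).PairwiseDisjoint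
      (fun p => Finset.univ.filter (fun i : Fin (2*k) => f i = p)) := by
    intro x hx y hy hxy
    apply Finset.disjoint_left.mpr
    intro i hix hiy
    rw [Finset.mem_filter] at hix hiy
    exact hxy (hix.2.symm.trans hiy.2)
  have hcard2 : I.card = 2 * ins.card := by
    rw [hIeq, Finset.card_biUnion hdisj]
    have hc : ∀ p ∈ ins, (Finset.univ.filter (fun i : Fin (2*k) => f i = p)).card = 2 := by
      intro p hp
      rw [hins, Finset.mem_filter, Finset.mem_range] at hp
      exact hf.2.1 p hp.2.1 (by omega)
    rw [Finset.sum_congr rfl hc, Finset.sum_const, smul_eq_mul, Nat.mul_comm]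
  have hinsA : ins.card = pairA k f j := by
    unfold pairA
    congr 1
    ext i
    simp only [hins, Finset.mem_filter, Finset.mem_range]
  omega

end Aux4
section Aux5

variable {k : ℕ}

/-- `sndPt j` is not an endpoint of any earlier pair. -/
lemma snd_unc {f : Fin (2*k) → ℕ} (hf : IsMatchingLabel k f) {j : ℕ}
    (hj1 : 1 ≤ j) (hjk : j ≤ k) :
    ∀ i, 1 ≤ i → i < j → sndPt k f j ≠ fstPt k f i ∧ sndPt k f j ≠ sndPt k f i := by
  intro i h1 h2
  obtain ⟨hjo, hjb, hjiff⟩ := two_pts hf hj1 hjk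
  obtain ⟨hio, hib, hiiff⟩ := two_pts hf h1 (by omega)
  have hfj : f ⟨sndPt k f j, hjb⟩ = j := (hjiff _ hjb).mpr (Or.inr rfl)
  constructor
  · intro h
    have : f ⟨sndPt k f j, hjb⟩ = i := (hiiff _ hjb).mpr (Or.inl h)
    omega
  · intro h
    have : f ⟨sndPt k f j, hjb⟩ = i := (hiiff _ hjb).mpr (Or.inr h)
    omega

/-- Key characterization: among points not used by earlier pairs, `sndPt j` has
minimal covering depth, and is the largest such point. -/
lemma snd_char {f : Fin (2*k) → ℕ} (hf : IsMatchingLabel k f) (hfc : PairCanonical k f)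
    {j : ℕ} (hj1 : 1 ≤ j) (hjk : j ≤ k) {m : ℕ} (hm : m < 2*k)
    (hunc : ∀ i, 1 ≤ i → i < j → m ≠ fstPt k f i ∧ m ≠ sndPt k f i) :
    cdf k f j (sndPt k f j) ≤ cdf k f j m ∧
      (cdf k f j m ≤ cdf k f j (sndPt k f j) → m ≤ sndPt k f j) := by
  classical
  obtain ⟨hjo, hjb, hjiff⟩ := two_pts hf hj1 hjk
  set p := f ⟨m, hm⟩ with hp
  have hp1 : 1 ≤ p := (hf.1 _).1
  have hp2 : p ≤ k := (hf.1 _).2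
  obtain ⟨hpo, hpb, hpiff⟩ := two_pts hf hp1 hp2
  have hmendp : m = fstPt k f p ∨ m = sndPt k f p := (hpiff m hm).mp rfl
  have hjp : j ≤ p := by
    by_contra hcon
    push_neg at hcon
    rcases hmendp with h | h
    · exact (hunc p hp1 hcon).1 h
    · exact (hunc p hp1 hcon).2 h
  have cds : cdf k f j (sndPt k f j) = pairDepth k f j := by
    rw [cdf_endpoint hf hj1 hjk hj1 hjk le_rfl (Or.inr rfl)]
    exact cdf_self hf hfc hj1 hjk
  have cdm : cdf k f j m = (below k f j p).card :=
    cdf_endpoint hf hj1 hjk hp1 hp2 hjp hmendp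
  rcases eq_or_lt_of_le hjp with rfl | hjp'
  · -- p = j
    rw [cds, cdm, cdf_self hf hfc hj1 hjk]
    exact ⟨le_rfl, fun _ => by omega⟩
  · -- j < p
    rw [cds, cdm]
    set C := (ctrs k f p).filter (fun i => j ≤ i) with hC
    have hsplit := ctrs_split hfc hj1 hjk hp1 hp2 hjp
    by_cases hCne : C.Nonempty
    · set r := C.min' hCne with hr
      have hrC : r ∈ C := Finset.min'_mem _ _
      rw [hC, Finset.mem_filter] at hrC
      obtain ⟨hrctr, hjr⟩ := hrC
      rw [mem_ctrs] at hrctr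
      obtain ⟨hrk, hr1, hrp, hrin⟩ := hrctr
      have hsub : ctrs k f r ⊆ below k f j p := by
        intro c hc
        rw [mem_ctrs] at hc
        obtain ⟨hck, hc1, hcr, hcin⟩ := hc
        have hcinp : PairInside k f c p := by
          obtain ⟨a1, a2⟩ := hcin
          obtain ⟨b1, b2⟩ := hrin
          exact ⟨by omega, by omega⟩
        have hcp : c ≠ p := by
          rintro rfl
          obtain ⟨a1, a2⟩ := hcin
          obtain ⟨b1, b2⟩ := hrin
          omega
        have hcj : c < j := by
          by_contra hcon
          push_neg at hcon
          have hcC : c ∈ C := by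
            rw [hC, Finset.mem_filter, mem_ctrs]
            exact ⟨⟨hck, hc1, hcp, hcinp⟩, hcon⟩
          have h1 := Finset.min'_le _ _ hcC
          have h2 := label_lt_of_inside hfc hc1 (by omega) hr1 (by omega) hcr hcin
          omega
        rw [mem_below]
        exact ⟨hcj, hc1, hcinp⟩
      have hge1 : pairDepth k f r ≤ (below k f j p).card := by
        rw [← ctrs_card]
        exact Finset.card_le_card hsub
      have hge2 : pairDepth k f j ≤ pairDepth k f r := by
        rcases eq_or_lt_of_le hjr with heq | h
        · exact le_of_eq (by rw [heq])
        · exact depth_le_of_label_lt hfc hj1 hjk hr1 (by omega) h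
      refine ⟨by omega, ?_⟩
      intro hle
      have hdeq : pairDepth k f j = pairDepth k f r := by omega
      have hmsp : m ≤ sndPt k f p := by omega
      rcases eq_or_lt_of_le hjr with heq | h
      · obtain ⟨b1, b2⟩ := hrin
        rw [← heq] at b2
        omega
      · have hdisj := disjoint_of_eq_depth hf hfc hj1 hjk hr1 (by omega) h hdeq
        obtain ⟨b1, b2⟩ := hrin
        omega
    · have hCz : C.card = 0 := by
        rw [Finset.not_nonempty_iff_eq_empty] at hCne
        rw [hCne, Finset.card_empty]
      rw [hC] at hCz
      have hbp : (below k f j p).card = pairDepth k f p := by omega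
      have hge : pairDepth k f j ≤ pairDepth k f p :=
        depth_le_of_label_lt hfc hj1 hjk hp1 hp2 hjp'
      refine ⟨by omega, ?_⟩
      intro hle
      have hdeq : pairDepth k f j = pairDepth k f p := by omega
      have hdisj := disjoint_of_eq_depth hf hfc hj1 hjk hp1 hp2 hjp' hdeq
      omega

end Aux5

/-- For non-crossing perfect matchings of `2k` points, the vector of nested-pair counts
`A(p)`, listed according to the canonical labeling, determines the matching: the map
from canonically labeled non-crossing matchings to such value-vectors is injective. -/
theorem matching_nestedCounts_injective (k : ℕ)
    (f g : Fin (2 * k) → ℕ)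
    (hf : IsMatchingLabel k f) (hfc : PairCanonical k f)
    (hg : IsMatchingLabel k g) (hgc : PairCanonical k g)
    (hA : ∀ j, 1 ≤ j → j ≤ k → pairA k f j = pairA k g j) :
    f = g := by
  classical
  have key : ∀ j, 1 ≤ j → j ≤ k →
      fstPt k f j = fstPt k g j ∧ sndPt k f j = sndPt k g j := by
    intro j
    induction j using Nat.strong_induction_on with
    | _ j IH =>
      intro hj1 hjk
      have hcdf : ∀ m, cdf k f j m = cdf k g j m := by
        intro m
        unfold cdf
        congr 1
        apply Finset.filter_congr
        intro i hi
        rw [Finset.mem_range] at hi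
        by_cases h1i : 1 ≤ i
        · obtain ⟨e1, e2⟩ := IH i hi h1i (by omega)
          rw [e1, e2]
        · constructor <;> rintro ⟨h, -⟩ <;> exact absurd h h1i
      have huncT : ∀ m, (∀ i, 1 ≤ i → i < j → m ≠ fstPt k g i ∧ m ≠ sndPt k g i) →
          (∀ i, 1 ≤ i → i < j → m ≠ fstPt k f i ∧ m ≠ sndPt k f i) := by
        intro m h i h1 h2
        obtain ⟨e1, e2⟩ := IH i h2 h1 (by omega)
        rw [e1, e2]
        exact h i h1 h2
      have huncT' : ∀ m, (∀ i, 1 ≤ i → i < j → m ≠ fstPt k f i ∧ m ≠ sndPt k f i) →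
          (∀ i, 1 ≤ i → i < j → m ≠ fstPt k g i ∧ m ≠ sndPt k g i) := by
        intro m h i h1 h2
        obtain ⟨e1, e2⟩ := IH i h2 h1 (by omega)
        rw [← e1, ← e2]
        exact h i h1 h2
      obtain ⟨fo, fb, -⟩ := two_pts hf hj1 hjk
      obtain ⟨go, gb, -⟩ := two_pts hg hj1 hjk
      have h1 := snd_char hf hfc hj1 hjk gb (huncT _ (snd_unc hg hj1 hjk))
      have h2 := snd_char hg hgc hj1 hjk fb (huncT' _ (snd_unc hf hj1 hjk))
      have esnd : sndPt k f j = sndPt k g j := by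
        obtain ⟨a1, a2⟩ := h1
        obtain ⟨b1, b2⟩ := h2
        rw [← hcdf, ← hcdf] at b1 b2
        exact le_antisymm (b2 (by omega)) (a2 (by omega))
      have efst : fstPt k f j = fstPt k g j := by
        have e1 := snd_eq_fst_add hf hj1 hjk
        have e2 := snd_eq_fst_add hg hj1 hjk
        have e3 := hA j hj1 hjk
        omega
      exact ⟨efst, esnd⟩
  funext i
  have hp1 := (hf.1 i).1
  have hp2 := (hf.1 i).2
  obtain ⟨-, -, hfiff⟩ := two_pts hf hp1 hp2
  obtain ⟨-, -, hgiff⟩ := two_pts hg hp1 hp2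
  have hend : (i : ℕ) = fstPt k f (f i) ∨ (i : ℕ) = sndPt k f (f i) :=
    (hfiff _ i.isLt).mp rfl
  obtain ⟨e1, e2⟩ := key (f i) hp1 hp2
  rw [e1, e2] at hend
  have : g ⟨(i : ℕ), i.isLt⟩ = f i := (hgiff _ i.isLt).mpr hend
  exact this.symm
end
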